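/- Let W be Gamma(κ, τ) with κ, τ > 0, and let 0 < p_r < 1. The map c ↦ E[log(1 + c·W)] − E[log(1 + p_r·c·W)] on (0,∞) is strictly increasing in c. -/

import Mathlib

open MeasureTheory Real

/-- Density of the Gamma distribution with shape `κ` and scale `τ`. -/
noncomputable def gammaScalePdf (κ τ w : ℝ) : ℝ :=
  w ^ (κ - 1) * Real.exp (-w / τ) / (Real.Gamma κ * τ ^ κ)

/-! For fixed `w > 0`, `log (1 + c w) - log (1 + p c w) = log ((1 + c w) / (1 + p c w))` is strictly
increasing in `c` because `p < 1`, and the Gamma density is positive on `(0, ∞)`. Both expectations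
are finite since `log (1 + c w) ≤ c w` and the Gamma law has a finite mean, so the difference of the
expectations is the expectation of the difference, which is strictly increasing in `c`. -/

theorem setIntegral_lt_setIntegral_of_forall_lt {X : Type*} [MeasurableSpace X]
    {μ : Measure X} {s : Set X} {f g : X → ℝ} (hs : MeasurableSet s) (hμs : μ s ≠ 0)
    (hf : IntegrableOn f s μ) (hg : IntegrableOn g s μ) (hlt : ∀ x ∈ s, f x < g x) :
    ∫ x in s, f x ∂μ < ∫ x in s, g x ∂μ := by
  have hsupp : Function.support (fun x => g x - f x) ∩ s = s :=
    Set.inter_eq_self_of_subset_right fun x hx => (sub_pos.2 (hlt x hx)).ne'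
  rw [← sub_pos, ← integral_sub hg hf,
    setIntegral_pos_iff_support_of_nonneg_ae (f := fun x => g x - f x) _ (hg.sub hf), hsupp]
  · exact pos_iff_ne_zero.2 hμs
  · filter_upwards [ae_restrict_mem hs] with x hx
    exact (sub_pos.2 (hlt x hx)).le

theorem strictMonoOn_log_one_add_sub_log_one_add_mul {p : ℝ} (hp0 : 0 ≤ p) (hp1 : p < 1) :
    StrictMonoOn (fun x => log (1 + x) - log (1 + p * x)) (Set.Ici 0) := by
  intro x (hx : 0 ≤ x) y (hy : 0 ≤ y) hxy
  have hcross : (1 + x) * (1 + p * y) < (1 + y) * (1 + p * x) := by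
    nlinarith [mul_pos (sub_pos.2 hxy) (sub_pos.2 hp1)]
  have hlog := log_lt_log (by positivity) hcross
  rw [log_mul (by positivity) (by positivity), log_mul (by positivity) (by positivity)] at hlog
  dsimp only
  linarith

theorem gammaScalePdf_pos {κ τ w : ℝ} (hκ : 0 < κ) (hτ : 0 < τ) (hw : 0 < w) :
    0 < gammaScalePdf κ τ w := by
  have := Gamma_pos_of_pos hκ
  unfold gammaScalePdf
  positivity

theorem integrableOn_mul_gammaScalePdf {κ τ : ℝ} (hκ : 0 < κ) (hτ : 0 < τ) :
    IntegrableOn (fun w => w * gammaScalePdf κ τ w) (Set.Ioi 0) := by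
  have h : IntegrableOn (fun w : ℝ => w ^ κ * exp (-τ⁻¹ * w ^ (1 : ℝ)) / (Gamma κ * τ ^ κ))
      (Set.Ioi 0) :=
    (integrableOn_rpow_mul_exp_neg_mul_rpow (by linarith) zero_lt_one (inv_pos.2 hτ)).div_const _
  refine h.congr_fun (fun w (hw : 0 < w) => ?_) measurableSet_Ioi
  dsimp only
  rw [gammaScalePdf, rpow_one, rpow_sub_one hw.ne', neg_mul, inv_mul_eq_div, neg_div]
  field_simp

theorem integrableOn_log_one_add_mul_mul_gammaScalePdf {κ τ c : ℝ} (hκ : 0 < κ) (hτ : 0 < τ)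
    (hc : 0 ≤ c) :
    IntegrableOn (fun w => log (1 + c * w) * gammaScalePdf κ τ w) (Set.Ioi 0) := by
  refine ((integrableOn_mul_gammaScalePdf hκ hτ).const_mul c).mono' ?_ ?_
  · unfold gammaScalePdf
    fun_prop
  · filter_upwards [ae_restrict_mem measurableSet_Ioi] with w (hw : 0 < w)
    have hcw : 0 ≤ c * w := by positivity
    rw [norm_mul, norm_of_nonneg (log_nonneg (by linarith)),
      norm_of_nonneg (gammaScalePdf_pos hκ hτ hw).le, ← mul_assoc]
    gcongr
    · exact (gammaScalePdf_pos hκ hτ hw).le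
    · linarith [log_le_sub_one_of_pos (by linarith : 0 < 1 + c * w)]

theorem noma_weak_rate_strictMono (κ τ p_r : ℝ)
    (hκ : 0 < κ) (hτ : 0 < τ) (hpr0 : 0 < p_r) (hpr1 : p_r < 1) :
    StrictMonoOn
      (fun c =>
        (∫ w in Set.Ioi (0 : ℝ), Real.log (1 + c * w) * gammaScalePdf κ τ w) -
        (∫ w in Set.Ioi (0 : ℝ), Real.log (1 + p_r * c * w) * gammaScalePdf κ τ w))
      (Set.Ioi 0) := by
  intro a (ha : 0 < a) b (hb : 0 < b) hab
  have hI (c : ℝ) (hc : 0 ≤ c) := integrableOn_log_one_add_mul_mul_gammaScalePdf hκ hτ hc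
  have hIa := hI (p_r * a) (by positivity)
  have hIb := hI (p_r * b) (by positivity)
  dsimp only
  rw [← integral_sub (hI a ha.le) hIa, ← integral_sub (hI b hb.le) hIb]
  refine setIntegral_lt_setIntegral_of_forall_lt measurableSet_Ioi (by simp)
    ((hI a ha.le).sub hIa) ((hI b hb.le).sub hIb) fun w (hw : 0 < w) => ?_
  rw [← sub_mul, ← sub_mul, mul_assoc, mul_assoc]
  exact mul_lt_mul_of_pos_right
    (strictMonoOn_log_one_add_sub_log_one_add_mul hpr0.le hpr1 (by positivity : 0 ≤ a * w)
      (by positivity : 0 ≤ b * w) (mul_lt_mul_of_pos_right hab hw))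
    (gammaScalePdf_pos hκ hτ hw)
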